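/- Let cohA be a reflexive symmetric relation on M and cohB a reflexive symmetric relation on N. For any two distinct pairs (α,β) ≠ (α',β') in M × N, exactly one of the following holds: scohBef cohA cohB (α,β) (α',β'), or scohBef (dual cohA) (dual cohB) (α,β) (α',β'). (Self-duality of the 'before' connective: (A ◁ B)⊥ ≡ A⊥ ◁ B⊥.) -/
import Mathlib

/-- Strict coherence of the "before" connective on the product of two webs. -/
def scohBef {M N : Type*} (cohA : M → M → Prop) (cohB : N → N → Prop)
    (p q : M × N) : Prop :=
  (cohA p.1 q.1 ∧ p.1 ≠ q.1) ∨ (p.1 = q.1 ∧ cohB p.2 q.2 ∧ p.2 ≠ q.2)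

/-- Dual of a coherence relation. -/
def dualCoh {M : Type*} (coh : M → M → Prop) : M → M → Prop :=
  fun x y => x = y ∨ ¬ coh x y

/-- Self-duality of "before": two distinct tokens are strictly coherent in `A ◁ B`
or strictly coherent in `A⊥ ◁ B⊥`, but not both. -/
theorem before_self_dual {M N : Type*} (cohA : M → M → Prop) (cohB : N → N → Prop)
    (hArefl : ∀ x, cohA x x) (hAsymm : ∀ x y, cohA x y → cohA y x)
    (hBrefl : ∀ x, cohB x x) (hBsymm : ∀ x y, cohB x y → cohB y x)
    (p q : M × N) (hpq : p ≠ q) :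
    Xor' (scohBef cohA cohB p q) (scohBef (dualCoh cohA) (dualCoh cohB) p q) := by
  have hne : p.1 ≠ q.1 ∨ p.2 ≠ q.2 := by
    by_contra h
    push_neg at h
    exact hpq (Prod.ext h.1 h.2)
  unfold Xor' scohBef dualCoh
  by_cases h1 : p.1 = q.1 <;> by_cases h2 : p.2 = q.2 <;>
    by_cases hA : cohA p.1 q.1 <;> by_cases hB : cohB p.2 q.2 <;> tauto
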